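/- If (A − P Cᵀ C)P + P(A − P Cᵀ C)ᵀ + P Cᵀ C P + B Bᵀ = 0 with P ≻ 0, and x is a complex eigenvector of (A − P Cᵀ C)ᵀ = Aᵀ − Cᵀ C P with eigenvalue λ satisfying Re(λ) ≥ 0, then C P x = 0 and Bᵀ x = 0, and hence Aᵀ x = λ x. -/

import Mathlib

/-!
Pair the Lyapunov identity with `x` on both sides. Since `(A - P Cᵀ C)ᵀ x = λ x`, the first two
terms contribute `2 Re λ · x* P x ≥ 0`, and the other two are `‖C P x‖²` and `‖Bᵀ x‖²`; a sum of
nonnegative terms vanishes only if each does. Then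
`Aᵀ x = (Aᵀ - Cᵀ C P) x + Cᵀ (C P x) = λ x`.
-/

open Matrix Complex

open scoped ComplexOrder

namespace Matrix

section RCLike

variable {ι κ κ' 𝕜 : Type*} [Fintype ι] [Fintype κ] [Fintype κ'] [RCLike 𝕜]

lemma star_dotProduct_conjTranspose_mul_self_mulVec (G : Matrix κ ι 𝕜) (x : ι → 𝕜) :
    star x ⬝ᵥ (Gᴴ * G) *ᵥ x = star (G *ᵥ x) ⬝ᵥ G *ᵥ x := by
  rw [← mulVec_mulVec, dotProduct_mulVec, ← star_mulVec]

lemma star_dotProduct_mul_add_mul_conjTranspose_mulVec {F P : Matrix ι ι 𝕜} {x : ι → 𝕜}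
    {μ : 𝕜} (hx : Fᴴ *ᵥ x = μ • x) :
    star x ⬝ᵥ (F * P + P * Fᴴ) *ᵥ x = (2 * RCLike.re μ : 𝕜) * (star x ⬝ᵥ P *ᵥ x) := by
  have hxF : star x ᵥ* F = star (μ • x) := by
    rw [← hx, star_mulVec, conjTranspose_conjTranspose]
  have hF : star x ⬝ᵥ (F * P) *ᵥ x = star μ * (star x ⬝ᵥ P *ᵥ x) := by
    rw [← mulVec_mulVec, dotProduct_mulVec, hxF, star_smul, smul_dotProduct, smul_eq_mul]
  have hP : star x ⬝ᵥ (P * Fᴴ) *ᵥ x = μ * (star x ⬝ᵥ P *ᵥ x) := by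
    rw [← mulVec_mulVec, hx, mulVec_smul, dotProduct_smul, smul_eq_mul]
  rw [add_mulVec, dotProduct_add, hF, hP, ← add_mul, RCLike.star_def, add_comm, RCLike.add_conj]

lemma mulVec_eq_zero_of_lyapunov_of_conjTranspose_mulVec_eq_smul {F P : Matrix ι ι 𝕜}
    {G : Matrix κ ι 𝕜} {H : Matrix ι κ' 𝕜} (hP : P.PosSemidef)
    (hlyap : F * P + P * Fᴴ + Gᴴ * G + H * Hᴴ = 0) {μ : 𝕜} (hμ : 0 ≤ RCLike.re μ)
    {x : ι → 𝕜} (hx : Fᴴ *ᵥ x = μ • x) :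
    G *ᵥ x = 0 ∧ Hᴴ *ᵥ x = 0 := by
  have hsum : (2 * RCLike.re μ : 𝕜) * (star x ⬝ᵥ P *ᵥ x) + star (G *ᵥ x) ⬝ᵥ G *ᵥ x
      + star (Hᴴ *ᵥ x) ⬝ᵥ Hᴴ *ᵥ x = 0 := by
    rw [← star_dotProduct_mul_add_mul_conjTranspose_mulVec hx,
      ← star_dotProduct_conjTranspose_mul_self_mulVec,
      ← star_dotProduct_conjTranspose_mul_self_mulVec, conjTranspose_conjTranspose,
      ← dotProduct_add, ← dotProduct_add, ← add_mulVec, ← add_mulVec, hlyap, zero_mulVec,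
      dotProduct_zero]
  have hPx : 0 ≤ (2 * RCLike.re μ : 𝕜) * (star x ⬝ᵥ P *ᵥ x) :=
    mul_nonneg (by exact_mod_cast mul_nonneg zero_le_two hμ) (hP.dotProduct_mulVec_nonneg x)
  rw [add_eq_zero_iff_of_nonneg (add_nonneg hPx (dotProduct_star_self_nonneg _))
    (dotProduct_star_self_nonneg _), add_eq_zero_iff_of_nonneg hPx
    (dotProduct_star_self_nonneg _), dotProduct_star_self_eq_zero,
    dotProduct_star_self_eq_zero] at hsum
  exact ⟨hsum.1.2, hsum.2⟩

end RCLike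

section Complexification

variable {l m n : Type*} [Fintype m]

lemma map_ofReal_mul (M : Matrix l m ℝ) (N : Matrix m n ℝ) :
    (M * N).map ofReal = M.map ofReal * N.map ofReal :=
  Matrix.map_mul (f := ofRealHom)

omit [Fintype m] in
lemma conjTranspose_map_ofReal (M : Matrix m n ℝ) :
    (M.map ofReal)ᴴ = Mᵀ.map ofReal := by
  ext i j
  simp

lemma PosSemidef.map_ofReal [DecidableEq m] {P : Matrix m m ℝ} (hP : P.PosSemidef) :
    (P.map ofReal).PosSemidef := by
  open scoped MatrixOrder Matrix.Norms.L2Operator in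
  obtain ⟨M, rfl⟩ := CStarAlgebra.nonneg_iff_eq_star_mul_self.mp hP.nonneg
  rw [map_ofReal_mul, star_eq_conjTranspose, conjTranspose_eq_transpose_of_trivial,
    ← conjTranspose_map_ofReal]
  exact posSemidef_conjTranspose_mul_self _

end Complexification

end Matrix

theorem stmt_3_general {n : ℕ}
    (A B C P : Matrix (Fin n) (Fin n) ℝ)
    (hP : P.PosDef)
    (hlyap : (A - P * Cᵀ * C) * P + P * (A - P * Cᵀ * C)ᵀ
        + P * Cᵀ * C * P + B * Bᵀ = 0)
    (lam : ℂ) (hlam : 0 ≤ lam.re)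
    (x : Fin n → ℂ)
    (heig : ((Aᵀ - Cᵀ * C * P).map Complex.ofReal).mulVec x = lam • x) :
    ((C * P).map Complex.ofReal).mulVec x = 0 ∧
    (Bᵀ.map Complex.ofReal).mulVec x = 0 ∧
    (Aᵀ.map Complex.ofReal).mulVec x = lam • x := by
  have hPt : Pᵀ = P := hP.isHermitian
  have hFt : (A - P * Cᵀ * C)ᵀ = Aᵀ - Cᵀ * C * P := by
    rw [transpose_sub, transpose_mul, transpose_mul, transpose_transpose, hPt, Matrix.mul_assoc]
  have hCP : P * Cᵀ * C * P = (C * P)ᵀ * (C * P) := by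
    simp only [transpose_mul, hPt, Matrix.mul_assoc]
  have hlyapℂ : (A - P * Cᵀ * C).map ofReal * P.map ofReal
      + P.map ofReal * ((A - P * Cᵀ * C).map ofReal)ᴴ
      + ((C * P).map ofReal)ᴴ * (C * P).map ofReal + B.map ofReal * (B.map ofReal)ᴴ = 0 := by
    simp only [conjTranspose_map_ofReal, ← map_ofReal_mul, ← Matrix.map_add _ ofReal_add, ← hCP,
      hlyap, Matrix.map_zero _ ofReal_zero]
  obtain ⟨hCPx, hBx⟩ := mulVec_eq_zero_of_lyapunov_of_conjTranspose_mulVec_eq_smul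
    hP.posSemidef.map_ofReal hlyapℂ hlam (by rwa [conjTranspose_map_ofReal, hFt])
  rw [conjTranspose_map_ofReal] at hBx
  refine ⟨hCPx, hBx, ?_⟩
  have hA : Aᵀ = (Aᵀ - Cᵀ * C * P) + Cᵀ * (C * P) := by
    rw [← Matrix.mul_assoc, sub_add_cancel]
  rw [hA, Matrix.map_add _ ofReal_add, add_mulVec, heig, map_ofReal_mul Cᵀ, ← mulVec_mulVec,
    hCPx, mulVec_zero, add_zero]

theorem stmt_3 {n : ℕ}
    (A B C P : Matrix (Fin n) (Fin n) ℝ)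
    (hP : P.PosDef)
    (hlyap : (A - P * Cᵀ * C) * P + P * (A - P * Cᵀ * C)ᵀ
        + P * Cᵀ * C * P + B * Bᵀ = 0)
    (lam : ℂ) (hlam : 0 ≤ lam.re)
    (x : Fin n → ℂ) (hx : x ≠ 0)
    (heig : ((Aᵀ - Cᵀ * C * P).map Complex.ofReal).mulVec x = lam • x) :
    ((C * P).map Complex.ofReal).mulVec x = 0 ∧
    (Bᵀ.map Complex.ofReal).mulVec x = 0 ∧
    (Aᵀ.map Complex.ofReal).mulVec x = lam • x :=
  stmt_3_general A B C P hP hlyap lam hlam x heig
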